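/- Define M(u_1,u_2,u_3) = [1 + (u_1-u_2)/(u_1-u_3)]E(s) - [(u_1-u_2)/(u_1-u_3) + (1-s)]K(s) with s = (u_2-u_3)(u_1+ν)/((u_1-u_3)(u_2+ν)). Then λ_2 - λ_3 = 2(u_2-u_3)(u_3+ν)Π(ρ,s) M(u_1,u_2,u_3) / ((u_2+ν)(K(s)-E(s))(E(s)-(1-s)K(s))). -/

import Mathlib

open Real Filter Topology Set

/-- Complete elliptic integral of the first kind (parameter = modulus squared). -/
noncomputable def Kel (s : ℝ) : ℝ :=
  ∫ θ in (0:ℝ)..(π / 2), 1 / Real.sqrt (1 - s * Real.sin θ ^ 2)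

/-- Complete elliptic integral of the second kind (parameter = modulus squared). -/
noncomputable def Eel (s : ℝ) : ℝ :=
  ∫ θ in (0:ℝ)..(π / 2), Real.sqrt (1 - s * Real.sin θ ^ 2)

/-- Complete elliptic integral of the third kind (parameter = modulus squared). -/
noncomputable def Pel (ρ s : ℝ) : ℝ :=
  ∫ θ in (0:ℝ)..(π / 2),
    1 / ((1 - ρ * Real.sin θ ^ 2) * Real.sqrt (1 - s * Real.sin θ ^ 2))

/-- The modulus-squared parameter `s = (u_2-u_3)(u_1+ν)/((u_1-u_3)(u_2+ν))`. -/
noncomputable def sCH (ν u1 u2 u3 : ℝ) : ℝ :=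
  (u2 - u3) * (u1 + ν) / ((u1 - u3) * (u2 + ν))

/-- The parameter `ρ = (u_2-u_3)/(u_2+ν)`. -/
noncomputable def rCH (ν u2 u3 : ℝ) : ℝ := (u2 - u3) / (u2 + ν)

/-- The Whitham speed `λ_1` for the Camassa-Holm equation. -/
noncomputable def lam1 (ν u1 u2 u3 : ℝ) : ℝ :=
  u1 + u2 + u3 + 2 * ν +
    2 * (u1 - u2) * (u3 + ν) * Pel (rCH ν u2 u3) (sCH ν u1 u2 u3)
      / ((u2 + ν) * Eel (sCH ν u1 u2 u3))

/-- The Whitham speed `λ_2` for the Camassa-Holm equation. -/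
noncomputable def lam2 (ν u1 u2 u3 : ℝ) : ℝ :=
  u1 + u2 + u3 + 2 * ν +
    2 * (u3 - u2) * (1 - sCH ν u1 u2 u3) * Pel (rCH ν u2 u3) (sCH ν u1 u2 u3)
      / (Eel (sCH ν u1 u2 u3) - (1 - sCH ν u1 u2 u3) * Kel (sCH ν u1 u2 u3))

/-- The Whitham speed `λ_3` for the Camassa-Holm equation. -/
noncomputable def lam3 (ν u1 u2 u3 : ℝ) : ℝ :=
  u1 + u2 + u3 + 2 * ν +
    2 * (u2 - u3) * (u3 + ν) * Pel (rCH ν u2 u3) (sCH ν u1 u2 u3)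
      / ((u2 + ν) * (Eel (sCH ν u1 u2 u3) - Kel (sCH ν u1 u2 u3)))

/-- The function `M(u_1,u_2,u_3) = [1 + (u_1-u_2)/(u_1-u_3)]E(s) - [(u_1-u_2)/(u_1-u_3) + (1-s)]K(s)`. -/
noncomputable def Mfun (ν u1 u2 u3 : ℝ) : ℝ :=
  (1 + (u1 - u2) / (u1 - u3)) * Eel (sCH ν u1 u2 u3) -
    ((u1 - u2) / (u1 - u3) + (1 - sCH ν u1 u2 u3)) * Kel (sCH ν u1 u2 u3)

/-!
With `Δ(θ) = √(1 - s sin²θ)`, the two denominators are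
`K(s) - E(s) = ∫ s sin²θ / Δ` and `E(s) - (1 - s) K(s) = ∫ s cos²θ / Δ`,
both positive for `0 < s < 1`. Since `1 - s = (u₁ - u₂)(u₃ + ν) / ((u₁ - u₃)(u₂ + ν))`,
`M` is `(1 - s)(u₂ + ν)/(u₃ + ν) · (E - K) + (E - (1 - s) K)`, and the formula becomes an
identity of rational functions in `E`, `K`, `Π`.
-/

section EllipticIntegrals

variable {s : ℝ}

lemma one_sub_mul_sin_sq_pos (hs : s < 1) (θ : ℝ) : 0 < 1 - s * sin θ ^ 2 := by
  rcases le_or_gt s 0 with hs0 | hs0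
  · nlinarith [sq_nonneg (sin θ)]
  · nlinarith [sin_sq_le_one θ]

lemma Continuous.div_sqrt_one_sub_mul_sin_sq (hs : s < 1) {f : ℝ → ℝ} (hf : Continuous f) :
    Continuous fun θ ↦ f θ / √(1 - s * sin θ ^ 2) :=
  hf.div (by fun_prop) fun θ ↦ (sqrt_pos.mpr (one_sub_mul_sin_sq_pos hs θ)).ne'

lemma Kel_sub_Eel (hs : s < 1) :
    Kel s - Eel s = ∫ θ in (0:ℝ)..(π / 2), s * sin θ ^ 2 / √(1 - s * sin θ ^ 2) := by
  rw [Kel, Eel, ← intervalIntegral.integral_sub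
    ((continuous_const.div_sqrt_one_sub_mul_sin_sq hs).intervalIntegrable _ _)
    ((by fun_prop : Continuous fun θ ↦ √(1 - s * sin θ ^ 2)).intervalIntegrable _ _)]
  refine intervalIntegral.integral_congr fun θ _ ↦ ?_
  have hx := one_sub_mul_sin_sq_pos hs θ
  have hsqrt : √(1 - s * sin θ ^ 2) ≠ 0 := (sqrt_pos.mpr hx).ne'
  field_simp
  rw [sq_sqrt hx.le]
  ring

lemma Eel_sub_one_sub_mul_Kel (hs : s < 1) :
    Eel s - (1 - s) * Kel s = ∫ θ in (0:ℝ)..(π / 2), s * cos θ ^ 2 / √(1 - s * sin θ ^ 2) := by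
  rw [Kel, Eel, ← intervalIntegral.integral_const_mul, ← intervalIntegral.integral_sub
    ((by fun_prop : Continuous fun θ ↦ √(1 - s * sin θ ^ 2)).intervalIntegrable _ _)
    (((continuous_const.div_sqrt_one_sub_mul_sin_sq hs).intervalIntegrable _ _).const_mul _)]
  refine intervalIntegral.integral_congr fun θ _ ↦ ?_
  have hx := one_sub_mul_sin_sq_pos hs θ
  have hsqrt : √(1 - s * sin θ ^ 2) ≠ 0 := (sqrt_pos.mpr hx).ne'
  field_simp
  rw [sq_sqrt hx.le]
  linear_combination (-s) * sin_sq_add_cos_sq θ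

lemma Eel_lt_Kel (hs0 : 0 < s) (hs1 : s < 1) : Eel s < Kel s := by
  rw [← sub_pos, Kel_sub_Eel hs1]
  refine intervalIntegral.intervalIntegral_pos_of_pos_on
    ((Continuous.div_sqrt_one_sub_mul_sin_sq hs1 (by fun_prop)).intervalIntegrable _ _)
    (fun θ hθ ↦ ?_) (by positivity)
  have hsin := sin_pos_of_pos_of_lt_pi hθ.1 (by linarith [hθ.2, pi_pos])
  exact div_pos (by positivity) (sqrt_pos.mpr (one_sub_mul_sin_sq_pos hs1 θ))

lemma one_sub_mul_Kel_lt_Eel (hs0 : 0 < s) (hs1 : s < 1) : (1 - s) * Kel s < Eel s := by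
  rw [← sub_pos, Eel_sub_one_sub_mul_Kel hs1]
  refine intervalIntegral.intervalIntegral_pos_of_pos_on
    ((Continuous.div_sqrt_one_sub_mul_sin_sq hs1 (by fun_prop)).intervalIntegrable _ _)
    (fun θ hθ ↦ ?_) (by positivity)
  have hcos := cos_pos_of_mem_Ioo ⟨by linarith [hθ.1, pi_pos], hθ.2⟩
  exact div_pos (by positivity) (sqrt_pos.mpr (one_sub_mul_sin_sq_pos hs1 θ))

end EllipticIntegrals

section WhithamParameters

variable {ν u1 u2 u3 : ℝ}

lemma one_sub_sCH (h13 : u1 - u3 ≠ 0) (h2 : u2 + ν ≠ 0) :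
    1 - sCH ν u1 u2 u3 = (u1 - u2) * (u3 + ν) / ((u1 - u3) * (u2 + ν)) := by
  rw [sCH]
  field_simp
  ring

lemma sCH_pos (h3 : -ν < u3) (h32 : u3 < u2) (h21 : u2 < u1) : 0 < sCH ν u1 u2 u3 := by
  unfold sCH
  exact div_pos (mul_pos (by linarith) (by linarith)) (mul_pos (by linarith) (by linarith))

lemma sCH_lt_one (h3 : -ν < u3) (h32 : u3 < u2) (h21 : u2 < u1) : sCH ν u1 u2 u3 < 1 := by
  rw [← sub_pos, one_sub_sCH (by linarith) (by linarith)]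
  exact div_pos (mul_pos (by linarith) (by linarith)) (mul_pos (by linarith) (by linarith))

lemma Mfun_eq (h13 : u1 - u3 ≠ 0) (h2 : u2 + ν ≠ 0) (h3 : u3 + ν ≠ 0) :
    Mfun ν u1 u2 u3 =
      (1 - sCH ν u1 u2 u3) * (u2 + ν) / (u3 + ν) * (Eel (sCH ν u1 u2 u3) - Kel (sCH ν u1 u2 u3)) +
        (Eel (sCH ν u1 u2 u3) - (1 - sCH ν u1 u2 u3) * Kel (sCH ν u1 u2 u3)) := by
  rw [Mfun, one_sub_sCH h13 h2]
  field_simp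
  ring

end WhithamParameters

/-- Formula for `λ_2 - λ_3` in terms of `M`:
`λ_2 - λ_3 = 2(u_2-u_3)(u_3+ν)Π(ρ,s) M / ((u_2+ν)(K-E)(E-(1-s)K))`. -/
theorem lam2_sub_lam3_eq (ν u1 u2 u3 : ℝ) (h3 : -ν < u3) (h32 : u3 < u2) (h21 : u2 < u1) :
    lam2 ν u1 u2 u3 - lam3 ν u1 u2 u3 =
      2 * (u2 - u3) * (u3 + ν) * Pel (rCH ν u2 u3) (sCH ν u1 u2 u3) * Mfun ν u1 u2 u3
        / ((u2 + ν) * (Kel (sCH ν u1 u2 u3) - Eel (sCH ν u1 u2 u3)) *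
            (Eel (sCH ν u1 u2 u3) - (1 - sCH ν u1 u2 u3) * Kel (sCH ν u1 u2 u3))) := by
  have hs0 := sCH_pos h3 h32 h21
  have hs1 := sCH_lt_one h3 h32 h21
  rw [Mfun_eq (by linarith) (by linarith) (by linarith), lam2, lam3]
  set s := sCH ν u1 u2 u3
  have hEK : Eel s - Kel s ≠ 0 := (sub_neg.mpr (Eel_lt_Kel hs0 hs1)).ne
  have hKE : Kel s - Eel s ≠ 0 := (sub_pos.mpr (Eel_lt_Kel hs0 hs1)).ne'
  have hEsK : Eel s - (1 - s) * Kel s ≠ 0 := (sub_pos.mpr (one_sub_mul_Kel_lt_Eel hs0 hs1)).ne'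
  have hu2 : u2 + ν ≠ 0 := by linarith
  have hu3 : u3 + ν ≠ 0 := by linarith
  field_simp
  ring
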